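/- arXiv:2103.09579 — 4 statements merged into one kernel-verified Lean document; each statement's English description precedes it below -/
import Mathlib

section
/- Let μ be a Borel probability measure on the circle group 𝕋 = ℝ/ℤ, let I ⊆ 𝕋 be a set with nonempty interior, and let C > 0 be a constant such that ∫_I g(u) du ≤ C ∫_I g(u) dμ(u) for every continuous function g ≥ 0 on 𝕋 (where du denotes the Haar/Lebesgue probability measure on 𝕋). Then there exist N ∈ ℕ, N ≥ 1, and points t₁, …, t_N ∈ 𝕋 such that, defining the probability measure μ' = (1/N) ∑_{j=1}^N (δ_{t_j} * μ) (i.e. the average of the pushforwards of μ under the translations u ↦ u + t_j), one has ∫_𝕋 g(u) du ≤ C·N·∫_𝕋 g(u) dμ'(u) for every continuous function g ≥ 0 on 𝕋. -/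
/-!
By compactness, finitely many translates `(a + ·) ⁻¹' I`, `a ∈ s`, cover the group. The
integral of `g` over each of them is, after translation, the integral over `I` of
`g (· - a)`, which the hypothesis bounds by `C` times its `μ`-integral over `I`, hence by
`C ∫ g d(δ_{-a} * μ)`. Summing over the cover gives the claim with `N = #s`.
-/

open MeasureTheory Set
open scoped ENNReal

lemma integral_le_sum_setIntegral_of_univ_subset_biUnion {α ι : Type*} [MeasurableSpace α]
    {μ : Measure α} {f : α → ℝ} (hf : Integrable f μ) (hf0 : 0 ≤ f) {s : Finset ι}
    {V : ι → Set α} (hV : univ ⊆ ⋃ i ∈ s, V i) :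
    ∫ x, f x ∂μ ≤ ∑ i ∈ s, ∫ x in V i, f x ∂μ := by
  have hle : μ ≤ ∑ i ∈ s, μ.restrict (V i) := by
    have := Measure.restrict_biUnion_le (μ := μ) (s := V) s.countable_toSet
    rw [Finset.set_biUnion_coe, univ_subset_iff.1 hV, Measure.restrict_univ,
      Measure.sum_fintype] at this
    exact this.trans_eq (s.sum_coe_sort fun i => μ.restrict (V i))
  rw [← integral_finsetSum_measure fun i _ => hf.restrict]
  exact integral_mono_measure hle (.of_forall hf0)
    (integrable_finsetSum_measure.2 fun i _ => hf.restrict)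

section

variable {G : Type*} [AddCommGroup G] [MeasurableSpace G]

lemma setIntegral_preimage_add_left [MeasurableAdd G] (ν : Measure G) [ν.IsAddLeftInvariant]
    (f : G → ℝ) (a : G) (I : Set G) :
    ∫ x in (a + ·) ⁻¹' I, f x ∂ν = ∫ y in I, f (y + -a) ∂ν := by
  simpa using (measurePreserving_add_left ν a).setIntegral_preimage_emb
    (measurableEmbedding_addLeft a) (fun y => f (y + -a)) I

variable [TopologicalSpace G] [IsTopologicalAddGroup G] [CompactSpace G] [BorelSpace G]

lemma setIntegral_preimage_add_left_le_integral_map {ν μ : Measure G} [IsFiniteMeasure μ]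
    [ν.IsAddLeftInvariant] {I : Set G} {C : ℝ} (hC : 0 ≤ C)
    (h : ∀ g : C(G, ℝ), (∀ u, 0 ≤ g u) → ∫ u in I, g u ∂ν ≤ C * ∫ u in I, g u ∂μ)
    {g : C(G, ℝ)} (hg : ∀ u, 0 ≤ g u) (a : G) :
    ∫ x in (a + ·) ⁻¹' I, g x ∂ν ≤ C * ∫ u, g u ∂(μ.map (· + -a)) := by
  set g' := g.comp (ContinuousMap.addRight (-a))
  have hg' : ∀ u, 0 ≤ g' u := fun u => hg _
  have hg'μ : Integrable g' μ := g'.continuous.integrable_of_hasCompactSupport (.of_compactSpace _)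
  calc ∫ x in (a + ·) ⁻¹' I, g x ∂ν = ∫ u in I, g' u ∂ν := setIntegral_preimage_add_left ν g a I
    _ ≤ C * ∫ u in I, g' u ∂μ := h g' hg'
    _ ≤ C * ∫ u, g' u ∂μ :=
      mul_le_mul_of_nonneg_left (setIntegral_le_integral hg'μ (.of_forall hg')) hC
    _ = C * ∫ u, g u ∂(μ.map (· + -a)) := by
      rw [integral_map (measurable_add_const _).aemeasurable g.continuous.aestronglyMeasurable]
      rfl

theorem exists_finset_integral_le_sum_integral_map_add (ν μ : Measure G) [IsFiniteMeasure ν]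
    [IsFiniteMeasure μ] [ν.IsAddLeftInvariant] {I : Set G} (hI : (interior I).Nonempty)
    {C : ℝ} (hC : 0 ≤ C)
    (h : ∀ g : C(G, ℝ), (∀ u, 0 ≤ g u) → ∫ u in I, g u ∂ν ≤ C * ∫ u in I, g u ∂μ) :
    ∃ s : Finset G, s.Nonempty ∧ ∀ g : C(G, ℝ), (∀ u, 0 ≤ g u) →
      ∫ u, g u ∂ν ≤ C * ∑ t ∈ s, ∫ u, g u ∂(μ.map (· + t)) := by
  obtain ⟨s, hs⟩ := compact_covered_by_add_left_translates isCompact_univ hI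
  have hne : s.Nonempty := by
    obtain ⟨a, ha, -⟩ := mem_iUnion₂.1 (hs (mem_univ 0))
    exact ⟨a, ha⟩
  refine ⟨s.map (Equiv.neg G).toEmbedding, hne.map, fun g hg => ?_⟩
  rw [Finset.sum_map, Finset.mul_sum]
  calc ∫ u, g u ∂ν ≤ ∑ a ∈ s, ∫ x in (a + ·) ⁻¹' I, g x ∂ν :=
        integral_le_sum_setIntegral_of_univ_subset_biUnion
          (g.continuous.integrable_of_hasCompactSupport (.of_compactSpace _)) hg hs
    _ ≤ _ := Finset.sum_le_sum fun a _ => setIntegral_preimage_add_left_le_integral_map hC h hg a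

end

/-- If `μ` is a Borel probability measure on the circle `𝕋 = ℝ/ℤ`,
`I ⊆ 𝕋` has nonempty interior, and `C > 0` is such that
`∫_I g du ≤ C ∫_I g dμ` for every continuous `g ≥ 0`, then there are `N ≥ 1` and
points `t₁, …, t_N` such that, with `μ' = (1/N) ∑_j (δ_{t_j} * μ)`,
`∫_𝕋 g du ≤ C·N·∫_𝕋 g dμ'` for every continuous `g ≥ 0`. -/
theorem stmt0 (μ : Measure UnitAddCircle) [IsProbabilityMeasure μ]
    (I : Set UnitAddCircle) (hI : (interior I).Nonempty)
    (C : ℝ) (hC : 0 < C)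
    (h : ∀ g : C(UnitAddCircle, ℝ), (∀ u, 0 ≤ g u) →
      ∫ u in I, g u ≤ C * ∫ u in I, g u ∂μ) :
    ∃ (N : ℕ), 1 ≤ N ∧ ∃ t : Fin N → UnitAddCircle,
      ∀ g : C(UnitAddCircle, ℝ), (∀ u, 0 ≤ g u) →
        ∫ u, g u ≤ C * N *
          ∫ u, g u ∂((N : ℝ≥0∞)⁻¹ •
            ∑ j : Fin N, Measure.map (fun u => u + t j) μ) := by
  obtain ⟨s, hs, hbound⟩ := exists_finset_integral_le_sum_integral_map_add volume μ hI hC.le h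
  refine ⟨s.card, hs.card_pos, fun j => s.equivFin.symm j, fun g hg => ?_⟩
  have hN : (s.card : ℝ) ≠ 0 := by simp [hs.ne_empty]
  have hint : ∀ j : Fin s.card, Integrable g (μ.map (· + (s.equivFin.symm j : UnitAddCircle))) :=
    fun j => g.continuous.integrable_of_hasCompactSupport (.of_compactSpace _)
  rw [integral_smul_measure, integral_finsetSum_measure fun j _ => hint j, ENNReal.toReal_inv,
    ENNReal.toReal_natCast, smul_eq_mul, ← mul_assoc, mul_assoc C, mul_inv_cancel₀ hN, mul_one,
    s.equivFin.symm.sum_comp (fun t : s => ∫ u, g u ∂(μ.map (· + (t : UnitAddCircle)))),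
    s.sum_coe_sort (fun t => ∫ u, g u ∂(μ.map (· + t)))]
  exact hbound g hg
end

section
/- Let 0 < H < 1 and define for t ∈ (0,1) the function ψ_H(t) = 4 sin²(πt) · ( ∑_{n=0}^∞ (n+t)^{-(2H+1)} + ∑_{n=0}^∞ (n+1−t)^{-(2H+1)} ). Then there exists a constant M > 0 such that ψ_H(t) ≤ M · t^{1−2H} (1−t)^{1−2H} for all t ∈ (0,1). -/
/-!
With `s = 2H + 1 > 1`, the tail `∑_{n ≥ 1} (n + t)^{-s}` is bounded by `C = ∑_{n ≥ 0} (n + 1)^{-s}`,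
so `∑_{n ≥ 0} (n + t)^{-s} ≤ t^{-s} + C`. Combined with `sin(πt) ≤ π min(t, 1 - t) ≤ 2π t(1 - t)`
this gives `sin²(πt) ∑ (n + t)^{-s} ≤ 4π²(1 + C) (t(1 - t))^{2-s}`, and the second series of `ψ_H`
is the first one at `1 - t`.
-/

/-- The spectral density (up to a normalizing constant) of fractional Gaussian noise of
Hurst index `H`, defined for `t ∈ (0,1)`:
`ψ_H(t) = 4 sin²(πt)·(∑_{n≥0} (n+t)^{-(2H+1)} + ∑_{n≥0} (n+1−t)^{-(2H+1)})`. -/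
noncomputable def psi (H t : ℝ) : ℝ :=
  4 * Real.sin (Real.pi * t) ^ 2 *
    ((∑' n : ℕ, ((n : ℝ) + t) ^ (-(2 * H + 1))) +
      ∑' n : ℕ, ((n : ℝ) + 1 - t) ^ (-(2 * H + 1)))

open Real

section ShiftedPSeries

variable {s t : ℝ}

lemma summable_nat_add_rpow_neg (hs : 1 < s) (ht : 0 ≤ t) :
    Summable fun n : ℕ => ((n : ℝ) + t) ^ (-s) := by
  refine ((summable_one_div_nat_add_rpow t s).2 hs).congr fun n => ?_
  rw [abs_of_nonneg (by positivity), rpow_neg (by positivity), one_div]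

lemma tsum_nat_add_rpow_neg_le (hs : 1 < s) (ht : 0 ≤ t) :
    ∑' n : ℕ, ((n : ℝ) + t) ^ (-s) ≤ t ^ (-s) + ∑' n : ℕ, ((n : ℝ) + 1) ^ (-s) := by
  have hsum := summable_nat_add_rpow_neg hs ht
  rw [hsum.tsum_eq_zero_add, Nat.cast_zero, zero_add]
  refine add_le_add_right (Summable.tsum_le_tsum (fun n => ?_) ((summable_nat_add_iff 1).2 hsum)
    (summable_nat_add_rpow_neg hs zero_le_one)) _
  exact rpow_le_rpow_of_nonpos (by positivity) (by push_cast; linarith) (by linarith)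

end ShiftedPSeries

lemma sin_pi_mul_le_two_pi_mul {t : ℝ} (ht0 : 0 ≤ t) (ht1 : t ≤ 1) :
    sin (π * t) ≤ 2 * π * (t * (1 - t)) := by
  have hle : sin (π * t) ≤ π * t := sin_le (by positivity)
  have hle' : sin (π * t) ≤ π * (1 - t) := by
    rw [← sin_pi_sub, ← mul_one_sub]
    exact sin_le (mul_nonneg pi_pos.le (by linarith))
  nlinarith [pi_pos]

lemma sin_pi_mul_sq_mul_tsum_le {s t : ℝ} (hs : 1 < s) (ht0 : 0 < t) (ht1 : t < 1) :
    sin (π * t) ^ 2 * ∑' n : ℕ, ((n : ℝ) + t) ^ (-s) ≤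
      4 * π ^ 2 * (1 + ∑' n : ℕ, ((n : ℝ) + 1) ^ (-s)) * (t * (1 - t)) ^ (2 - s) := by
  set C := ∑' n : ℕ, ((n : ℝ) + 1) ^ (-s)
  set u := t * (1 - t)
  have hu : 0 < u := mul_pos ht0 (by linarith)
  have hC : 0 ≤ C := tsum_nonneg fun n => by positivity
  have hsin : 0 ≤ sin (π * t) :=
    sin_nonneg_of_nonneg_of_le_pi (by positivity) (by nlinarith [pi_pos])
  have hsin_sq : sin (π * t) ^ 2 ≤ 4 * π ^ 2 * u ^ 2 := by
    nlinarith [sin_pi_mul_le_two_pi_mul ht0.le ht1.le]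
  -- `u² = u^{2-s} u^s` and `u^s t^{-s} = (1 - t)^s`; both `u^s` and `(1 - t)^s` are at most `1`
  have hsplit : u ^ 2 = u ^ (2 - s) * u ^ s := by
    rw [← rpow_add hu, sub_add_cancel, rpow_two]
  have hus : u ^ s ≤ 1 :=
    rpow_le_one hu.le (by nlinarith) (by linarith)
  have hut : u ^ s * t ^ (-s) ≤ 1 := by
    rw [mul_rpow ht0.le (by linarith), rpow_neg ht0.le, mul_comm (t ^ s), mul_assoc,
      mul_inv_cancel₀ (rpow_pos_of_pos ht0 s).ne', mul_one]
    exact rpow_le_one (by linarith) (by linarith) (by linarith)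
  have hu2s : 0 ≤ u ^ (2 - s) := (rpow_pos_of_pos hu _).le
  calc sin (π * t) ^ 2 * ∑' n : ℕ, ((n : ℝ) + t) ^ (-s)
      ≤ 4 * π ^ 2 * u ^ 2 * (t ^ (-s) + C) :=
        mul_le_mul hsin_sq (tsum_nat_add_rpow_neg_le hs ht0.le)
          (tsum_nonneg fun n => by positivity) (by positivity)
    _ = 4 * π ^ 2 * u ^ (2 - s) * (u ^ s * t ^ (-s) + u ^ s * C) := by rw [hsplit]; ring
    _ ≤ 4 * π ^ 2 * u ^ (2 - s) * (1 + C) := by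
        gcongr
        nlinarith
    _ = 4 * π ^ 2 * (1 + C) * u ^ (2 - s) := by ring

theorem stmt3_general (H : ℝ) (hH0 : 0 < H) :
    ∃ M > 0, ∀ t ∈ Set.Ioo (0 : ℝ) 1,
      psi H t ≤ M * t ^ (1 - 2 * H) * (1 - t) ^ (1 - 2 * H) := by
  have hs : 1 < 2 * H + 1 := by linarith
  set C := ∑' n : ℕ, ((n : ℝ) + 1) ^ (-(2 * H + 1))
  have hC : 0 ≤ C := tsum_nonneg fun n => by positivity
  refine ⟨32 * π ^ 2 * (1 + C), by positivity, fun t ⟨ht0, ht1⟩ => ?_⟩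
  have hleft := sin_pi_mul_sq_mul_tsum_le hs ht0 ht1
  have hright := sin_pi_mul_sq_mul_tsum_le hs (sub_pos.2 ht1) (sub_lt_self 1 ht0)
  rw [mul_one_sub, sin_pi_sub, sub_sub_cancel, mul_comm (1 - t)] at hright
  have hreflect : ∑' n : ℕ, ((n : ℝ) + 1 - t) ^ (-(2 * H + 1)) =
      ∑' n : ℕ, ((n : ℝ) + (1 - t)) ^ (-(2 * H + 1)) := by
    simp only [add_sub_assoc]
  have hexp : (2 : ℝ) - (2 * H + 1) = 1 - 2 * H := by ring
  rw [hexp, mul_rpow ht0.le (sub_pos.2 ht1).le] at hleft hright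
  rw [psi, hreflect]
  linarith

/-- For `0 < H < 1` there is `M > 0` with
`ψ_H(t) ≤ M · t^{1−2H} (1−t)^{1−2H}` for all `t ∈ (0,1)`. -/
theorem stmt3 (H : ℝ) (hH0 : 0 < H) (hH1 : H < 1) :
    ∃ M > 0, ∀ t ∈ Set.Ioo (0 : ℝ) 1,
      psi H t ≤ M * t ^ (1 - 2 * H) * (1 - t) ^ (1 - 2 * H) :=
  stmt3_general H hH0
end

section
/- Let 0 < H₁ < H₂ < 1 and define ψ_H(t) = 4 sin²(πt) · ( ∑_{n=0}^∞ (n+t)^{-(2H+1)} + ∑_{n=0}^∞ (n+1−t)^{-(2H+1)} ) for t ∈ (0,1). Then ψ_{H₁}(t)/ψ_{H₂}(t) → 0 as t → 0⁺ and ψ_{H₁}(t)/ψ_{H₂}(t) → 0 as t → 1⁻. -/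
/-!
For `t ≤ 1/2` the `n = 0` term `t^{-(2H+1)}` dominates `ψ_H(t) / (4 sin²(πt))`: every other term
of the two Hurwitz-type sums is bounded uniformly in `t`. Hence
`ψ_{H₁}(t)/ψ_{H₂}(t) ≤ (t^{-(2H₁+1)} + C) · t^{2H₂+1} = t^{2(H₂-H₁)} + C t^{2H₂+1} → 0` as `t → 0⁺`.
The limit at `1` follows from the symmetry `ψ_H(1 - t) = ψ_H(t)`.
-/

open Real Filter Set Topology

/-- The Hurwitz zeta function `ζ(p, c)` for real `p > 1`, `c > 0` (junk value `0` when `p ≤ 1`). -/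
noncomputable def hurwitzSum (p c : ℝ) : ℝ := ∑' n : ℕ, ((n : ℝ) + c) ^ (-p)

section hurwitzSum

variable {p c d : ℝ}

lemma summable_nat_add_rpow_neg_s6 (hp : 1 < p) (hc : 0 < c) :
    Summable fun n : ℕ => ((n : ℝ) + c) ^ (-p) :=
  ((summable_one_div_nat_add_rpow c p).mpr hp).congr fun n => by
    rw [abs_of_pos (by positivity), rpow_neg (by positivity), one_div]

lemma hurwitzSum_nonneg (hc : 0 ≤ c) : 0 ≤ hurwitzSum p c :=
  tsum_nonneg fun n => by positivity

lemma hurwitzSum_anti (hp : 1 < p) (hc : 0 < c) (hcd : c ≤ d) :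
    hurwitzSum p d ≤ hurwitzSum p c :=
  (summable_nat_add_rpow_neg_s6 hp (hc.trans_le hcd)).tsum_le_tsum
    (fun n => rpow_le_rpow_of_nonpos (by positivity) (by linarith) (by linarith))
    (summable_nat_add_rpow_neg_s6 hp hc)

lemma rpow_neg_le_hurwitzSum (hp : 1 < p) (hc : 0 < c) : c ^ (-p) ≤ hurwitzSum p c := by
  simpa [hurwitzSum] using (summable_nat_add_rpow_neg_s6 hp hc).le_tsum 0 fun n _ => by positivity

lemma hurwitzSum_eq_rpow_neg_add (hp : 1 < p) (hc : 0 < c) :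
    hurwitzSum p c = c ^ (-p) + hurwitzSum p (c + 1) := by
  rw [hurwitzSum, (summable_nat_add_rpow_neg_s6 hp hc).tsum_eq_zero_add, hurwitzSum]
  simp_rw [Nat.cast_zero, zero_add, Nat.cast_add_one, add_right_comm _ (1 : ℝ) c, add_assoc]

lemma hurwitzSum_le_rpow_neg_add (hp : 1 < p) (hc : 0 < c) :
    hurwitzSum p c ≤ c ^ (-p) + hurwitzSum p 1 := by
  rw [hurwitzSum_eq_rpow_neg_add hp hc]
  gcongr
  exact hurwitzSum_anti hp one_pos (by linarith)

end hurwitzSum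

lemma psi_eq_hurwitzSum (H t : ℝ) :
    psi H t = 4 * sin (π * t) ^ 2 *
      (hurwitzSum (2 * H + 1) t + hurwitzSum (2 * H + 1) (1 - t)) := by
  simp only [psi, hurwitzSum, add_sub_assoc]

lemma psi_one_sub (H t : ℝ) : psi H (1 - t) = psi H t := by
  rw [psi_eq_hurwitzSum, psi_eq_hurwitzSum, sub_sub_cancel, add_comm (hurwitzSum _ (1 - t)),
    mul_sub, mul_one, sin_pi_sub]

lemma psi_nonneg (H : ℝ) {t : ℝ} (ht : t ∈ Ioo 0 1) : 0 ≤ psi H t := by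
  rw [psi_eq_hurwitzSum]
  have := hurwitzSum_nonneg (p := 2 * H + 1) ht.1.le
  have := hurwitzSum_nonneg (p := 2 * H + 1) (sub_nonneg.mpr ht.2.le)
  positivity

lemma sin_sq_mul_rpow_neg_le_psi {H t : ℝ} (hH : 0 < H) (ht : t ∈ Ioo 0 1) :
    4 * sin (π * t) ^ 2 * t ^ (-(2 * H + 1)) ≤ psi H t := by
  rw [psi_eq_hurwitzSum]
  gcongr
  linarith [rpow_neg_le_hurwitzSum (by linarith : 1 < 2 * H + 1) ht.1,
    hurwitzSum_nonneg (p := 2 * H + 1) (sub_nonneg.mpr ht.2.le)]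

lemma psi_le_sin_sq_mul {H t : ℝ} (hH : 0 < H) (ht : t ∈ Ioc 0 (1 / 2)) :
    psi H t ≤ 4 * sin (π * t) ^ 2 *
      (t ^ (-(2 * H + 1)) + (hurwitzSum (2 * H + 1) 1 + hurwitzSum (2 * H + 1) (1 / 2))) := by
  have hp : 1 < 2 * H + 1 := by linarith
  rw [psi_eq_hurwitzSum]
  gcongr 4 * sin (π * t) ^ 2 * ?_
  linarith [hurwitzSum_le_rpow_neg_add hp ht.1,
    hurwitzSum_anti hp (by norm_num : (0 : ℝ) < 1 / 2) (by linarith [ht.2] : 1 / 2 ≤ 1 - t)]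

lemma psi_div_psi_le {H₁ H₂ t : ℝ} (h1 : 0 < H₁) (h12 : H₁ < H₂) (ht : t ∈ Ioc 0 (1 / 2)) :
    psi H₁ t / psi H₂ t ≤
      t ^ (2 * (H₂ - H₁)) +
        (hurwitzSum (2 * H₁ + 1) 1 + hurwitzSum (2 * H₁ + 1) (1 / 2)) * t ^ (2 * H₂ + 1) := by
  set C := hurwitzSum (2 * H₁ + 1) 1 + hurwitzSum (2 * H₁ + 1) (1 / 2)
  obtain ⟨ht0, ht2⟩ := ht
  have hC : 0 ≤ C := add_nonneg (hurwitzSum_nonneg zero_le_one) (hurwitzSum_nonneg one_half_pos.le)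
  have hs : 0 < 4 * sin (π * t) ^ 2 := by
    have := sin_pos_of_pos_of_lt_pi (by positivity : 0 < π * t) (by nlinarith [pi_pos])
    positivity
  calc psi H₁ t / psi H₂ t
      ≤ 4 * sin (π * t) ^ 2 * (t ^ (-(2 * H₁ + 1)) + C) /
          (4 * sin (π * t) ^ 2 * t ^ (-(2 * H₂ + 1))) :=
        div_le_div₀ (by positivity) (psi_le_sin_sq_mul h1 ⟨ht0, ht2⟩) (by positivity)
          (sin_sq_mul_rpow_neg_le_psi (h1.trans h12) ⟨ht0, by linarith⟩)
    _ = (t ^ (-(2 * H₁ + 1)) + C) * t ^ (2 * H₂ + 1) := by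
        rw [mul_div_mul_left _ _ hs.ne', rpow_neg ht0.le (2 * H₂ + 1), div_inv_eq_mul]
    _ = t ^ (2 * (H₂ - H₁)) + C * t ^ (2 * H₂ + 1) := by
        rw [add_mul, ← rpow_add ht0, show -(2 * H₁ + 1) + (2 * H₂ + 1) = 2 * (H₂ - H₁) by ring]

lemma tendsto_psi_div_psi_nhdsWithin_zero {H₁ H₂ : ℝ} (h1 : 0 < H₁) (h12 : H₁ < H₂) :
    Tendsto (fun t => psi H₁ t / psi H₂ t) (𝓝[Ioo 0 1] 0) (𝓝 0) := by
  set C := hurwitzSum (2 * H₁ + 1) 1 + hurwitzSum (2 * H₁ + 1) (1 / 2)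
  have hbound : Tendsto (fun t : ℝ => t ^ (2 * (H₂ - H₁)) + C * t ^ (2 * H₂ + 1))
      (𝓝[Ioo 0 1] 0) (𝓝 0) := by
    have hcont : ContinuousAt (fun t : ℝ => t ^ (2 * (H₂ - H₁)) + C * t ^ (2 * H₂ + 1)) 0 := by
      fun_prop (disch := right; linarith)
    simpa [zero_rpow (by linarith : 2 * (H₂ - H₁) ≠ 0), zero_rpow (by linarith : 2 * H₂ + 1 ≠ 0)]
      using hcont.tendsto.mono_left nhdsWithin_le_nhds
  refine tendsto_of_tendsto_of_tendsto_of_le_of_le' tendsto_const_nhds hbound ?_ ?_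
  · filter_upwards [self_mem_nhdsWithin] with t ht
    exact div_nonneg (psi_nonneg H₁ ht) (psi_nonneg H₂ ht)
  · filter_upwards [self_mem_nhdsWithin,
      nhdsWithin_le_nhds (eventually_le_nhds (by norm_num : (0 : ℝ) < 1 / 2))] with t ht ht2
    exact psi_div_psi_le h1 h12 ⟨ht.1, ht2⟩

lemma tendsto_one_sub_nhdsWithin_Ioo :
    Tendsto (fun t : ℝ => 1 - t) (𝓝[Ioo 0 1] 1) (𝓝[Ioo 0 1] 0) := by
  have hmaps : MapsTo (fun t : ℝ => 1 - t) (Ioo 0 1) (Ioo 0 1) :=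
    fun t ht => ⟨by linarith [ht.2], by linarith [ht.1]⟩
  have h := ((continuous_sub_left (1 : ℝ)).continuousWithinAt (x := 1)).tendsto_nhdsWithin hmaps
  rwa [sub_self] at h

theorem stmt6_general (H₁ H₂ : ℝ) (h1 : 0 < H₁) (h12 : H₁ < H₂) :
    Filter.Tendsto (fun t => psi H₁ t / psi H₂ t)
      (nhdsWithin 0 (Set.Ioo (0 : ℝ) 1)) (nhds 0) ∧
    Filter.Tendsto (fun t => psi H₁ t / psi H₂ t)
      (nhdsWithin 1 (Set.Ioo (0 : ℝ) 1)) (nhds 0) := by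
  have hzero := tendsto_psi_div_psi_nhdsWithin_zero h1 h12
  refine ⟨hzero, ?_⟩
  simpa only [Function.comp_def, psi_one_sub] using hzero.comp tendsto_one_sub_nhdsWithin_Ioo

/-- For `0 < H₁ < H₂ < 1`, the ratio `ψ_{H₁}(t)/ψ_{H₂}(t)` tends to `0`
as `t → 0⁺` and as `t → 1⁻`. -/
theorem stmt6 (H₁ H₂ : ℝ) (h1 : 0 < H₁) (h12 : H₁ < H₂) (h2 : H₂ < 1) :
    Filter.Tendsto (fun t => psi H₁ t / psi H₂ t)
      (nhdsWithin 0 (Set.Ioo (0 : ℝ) 1)) (nhds 0) ∧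
    Filter.Tendsto (fun t => psi H₁ t / psi H₂ t)
      (nhdsWithin 1 (Set.Ioo (0 : ℝ) 1)) (nhds 0) :=
  stmt6_general H₁ H₂ h1 h12
end

section
/- Let 0 < a < 1 and b ≥ 0 be real numbers with a + 2b ≥ 1. Define a_{nm} = |n−m|^{−a} |n|^{−b} |m|^{−b} for integers n, m with n ≠ m, n ≠ 0, m ≠ 0, and a_{nm} = 0 if n = m or n = 0 or m = 0. Then the matrix (a_{nm})_{n,m∈ℤ} defines a bounded operator on ℓ²(ℤ): there exists a constant K > 0 such that for every sequence (x_n)_{n∈ℤ} of nonnegative reals with ∑_{n∈ℤ} x_n² < ∞, one has ∑_{n∈ℤ} ( ∑_{m∈ℤ} a_{nm} x_m )² ≤ K² ∑_{n∈ℤ} x_n², and in particular the quadratic form bound ∑_{n∈ℤ} ∑_{m∈ℤ} a_{nm} x_n x_m ≤ K ∑_{n∈ℤ} x_n². -/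
/-!
Schur test with the weight `w m = |m|^{-1/2}`. Its row sums are, up to the factor `|n|^{-b}`,
the convolutions `∑_m |n - m|^{-a} |m|^{-(b + 1/2)}`; after lowering `b + 1/2` to an exponent
`t < 1` with `a + t > 1` and `a + b + t ≥ 3/2`, these are `O(|n|^{1 - a - t}) = O(|n|^{b - 1/2})`,
by splitting the sum according to whether `|m|` or `|n - m|` is the smaller one and comparing
with `∫ x^{-t}` near the origin and `∫ x^{-(a+t)}` at infinity. So the weighted row sums are
`O(w n)`, and the matrix being symmetric, Cauchy–Schwarz bounds `‖A x‖²` by `O(‖x‖²)`.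
-/

open scoped ENNReal NNReal
open Finset Set MeasureTheory

/-- The bi-infinite matrix `a_{nm} = |n−m|^{−a} |n|^{−b} |m|^{−b}`, with the convention
that `a_{nm} = 0` whenever `n = m` or one of the indices is `0`. -/
noncomputable def matA (a b : ℝ) (n m : ℤ) : ℝ :=
  if n = m ∨ n = 0 ∨ m = 0 then 0
  else |((n - m : ℤ) : ℝ)| ^ (-a) * |(n : ℝ)| ^ (-b) * |(m : ℝ)| ^ (-b)

namespace ENNReal

theorem sum_sq_le_sum_mul_sum_of_sq_le_mul {ι : Type*} (s : Finset ι) {r f g : ι → ℝ≥0∞}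
    (h : ∀ i ∈ s, r i ^ 2 ≤ f i * g i) :
    (∑ i ∈ s, r i) ^ 2 ≤ (∑ i ∈ s, f i) * ∑ i ∈ s, g i := by
  rcases eq_or_ne ((∑ i ∈ s, f i) * ∑ i ∈ s, g i) ⊤ with htop | htop
  · exact htop ▸ le_top
  by_cases hzero : (∑ i ∈ s, f i) = 0 ∨ ∑ i ∈ s, g i = 0
  · have hr : ∀ i ∈ s, r i = 0 := fun i hi => by
      have := h i hi
      rcases hzero with hz | hz <;> simp_all [sum_eq_zero_iff]
    simp [sum_eq_zero hr]
  push Not at hzero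
  have hf : (∑ i ∈ s, f i) ≠ ⊤ := fun hf => htop (by rw [hf, top_mul hzero.2])
  have hg : (∑ i ∈ s, g i) ≠ ⊤ := fun hg => htop (by rw [hg, mul_top hzero.1])
  rw [sum_ne_top] at hf hg
  have hr : ∀ i ∈ s, r i ≠ ⊤ := fun i hi hri => by
    simpa [hri, mul_eq_top, hf i hi, hg i hi] using h i hi
  have key := Finset.sum_sq_le_sum_mul_sum_of_sq_le_mul s (r := fun i => (r i).toNNReal)
    (f := fun i => (f i).toNNReal) (g := fun i => (g i).toNNReal) (fun _ _ => zero_le)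
    (fun _ _ => zero_le) fun i hi => by
      rw [← toNNReal_pow, ← toNNReal_mul]
      exact toNNReal_mono (mul_ne_top (hf i hi) (hg i hi)) (h i hi)
  have := coe_le_coe.2 key
  push_cast at this
  rwa [sum_congr rfl fun i hi => coe_toNNReal (hr i hi), sum_congr rfl fun i hi =>
    coe_toNNReal (hf i hi), sum_congr rfl fun i hi => coe_toNNReal (hg i hi)] at this

theorem tsum_sq_le_tsum_mul_tsum_of_sq_le_mul {ι : Type*} {r f g : ι → ℝ≥0∞}
    (h : ∀ i, r i ^ 2 ≤ f i * g i) :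
    (∑' i, r i) ^ 2 ≤ (∑' i, f i) * ∑' i, g i := by
  rw [ENNReal.tsum_eq_iSup_sum, iSup_pow]
  refine iSup_le fun s => (sum_sq_le_sum_mul_sum_of_sq_le_mul s fun i _ => h i).trans ?_
  gcongr <;> exact ENNReal.sum_le_tsum s

theorem tsum_sq_tsum_mul_le_of_schur {ι : Type*} {A : ι → ι → ℝ≥0∞} {w : ι → ℝ≥0∞}
    {C₁ C₂ : ℝ≥0∞} (hw₀ : ∀ i, w i ≠ 0) (hw : ∀ i, w i ≠ ⊤)
    (hrow : ∀ i, ∑' j, A i j * w j ≤ C₁ * w i) (hcol : ∀ j, ∑' i, A i j * w i ≤ C₂ * w j)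
    (x : ι → ℝ≥0∞) :
    ∑' i, (∑' j, A i j * x j) ^ 2 ≤ C₁ * C₂ * ∑' j, x j ^ 2 := by
  have hw_cancel (j) : w j * (w j)⁻¹ = 1 := ENNReal.mul_inv_cancel (hw₀ j) (hw j)
  have hrow_sq (i) : (∑' j, A i j * x j) ^ 2 ≤ C₁ * w i * ∑' j, A i j * (w j)⁻¹ * x j ^ 2 := by
    refine (tsum_sq_le_tsum_mul_tsum_of_sq_le_mul fun j => le_of_eq ?_).trans
      (mul_le_mul_left (hrow i) _)
    rw [show A i j * w j * (A i j * (w j)⁻¹ * x j ^ 2) = (A i j * x j) ^ 2 * (w j * (w j)⁻¹)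
      by ring, hw_cancel, mul_one]
  calc ∑' i, (∑' j, A i j * x j) ^ 2
      ≤ ∑' i, C₁ * w i * ∑' j, A i j * (w j)⁻¹ * x j ^ 2 := ENNReal.tsum_le_tsum hrow_sq
    _ = C₁ * ∑' j, (w j)⁻¹ * x j ^ 2 * ∑' i, A i j * w i := by
      simp_rw [mul_assoc, ← ENNReal.tsum_mul_left]
      rw [ENNReal.tsum_comm]
      exact tsum_congr fun j => tsum_congr fun i => by ring
    _ ≤ C₁ * ∑' j, (w j)⁻¹ * x j ^ 2 * (C₂ * w j) := by gcongr with j; exact hcol j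
    _ = C₁ * C₂ * ∑' j, x j ^ 2 := by
      have hterm (j : ι) : (w j)⁻¹ * x j ^ 2 * (C₂ * w j) = C₂ * x j ^ 2 := by
        rw [show (w j)⁻¹ * x j ^ 2 * (C₂ * w j) = C₂ * x j ^ 2 * (w j * (w j)⁻¹) by ring,
          hw_cancel, mul_one]
      simp_rw [hterm, ENNReal.tsum_mul_left, mul_assoc]

end ENNReal

theorem summable_of_tsum_ofReal_ne_top {ι : Type*} {f : ι → ℝ} (hf : ∀ i, 0 ≤ f i)
    (h : ∑' i, ENNReal.ofReal (f i) ≠ ⊤) : Summable f :=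
  (ENNReal.summable_toReal h).congr fun i => ENNReal.toReal_ofReal (hf i)

theorem summable_tsum_sq_le_of_tsum_ofReal_sq_le {ι κ : Type*} {f : ι → κ → ℝ}
    (hf : ∀ i j, 0 ≤ f i j) {c : ℝ} (hc : 0 ≤ c)
    (h : ∑' i, (∑' j, ENNReal.ofReal (f i j)) ^ 2 ≤ ENNReal.ofReal c) :
    (∀ i, Summable (f i)) ∧ Summable (fun i => (∑' j, f i j) ^ 2) ∧
      ∑' i, (∑' j, f i j) ^ 2 ≤ c := by
  have htop : ∑' i, (∑' j, ENNReal.ofReal (f i j)) ^ 2 ≠ ⊤ :=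
    ne_top_of_le_ne_top ENNReal.ofReal_ne_top h
  have hrow (i : ι) : Summable (f i) := by
    refine summable_of_tsum_ofReal_ne_top (hf i) fun hi => htop ?_
    exact eq_top_mono (ENNReal.le_tsum i) (by simp [hi])
  have hsq (i : ι) : ENNReal.ofReal ((∑' j, f i j) ^ 2) = (∑' j, ENNReal.ofReal (f i j)) ^ 2 := by
    rw [ENNReal.ofReal_pow (tsum_nonneg (hf i)), ENNReal.ofReal_tsum_of_nonneg (hf i) (hrow i)]
  have hsq_nonneg (i : ι) : 0 ≤ (∑' j, f i j) ^ 2 := sq_nonneg _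
  have hsum : Summable fun i => (∑' j, f i j) ^ 2 :=
    summable_of_tsum_ofReal_ne_top hsq_nonneg (by simpa only [hsq] using htop)
  refine ⟨hrow, hsum, (ENNReal.ofReal_le_ofReal_iff hc).1 ?_⟩
  rwa [ENNReal.ofReal_tsum_of_nonneg hsq_nonneg hsum, tsum_congr hsq]

theorem tsum_mul_le_of_tsum_sq_le {ι : Type*} {x r : ι → ℝ} (hx : Summable fun i => x i ^ 2)
    (hr : Summable fun i => r i ^ 2) {K : ℝ} (hK : 0 < K)
    (h : ∑' i, r i ^ 2 ≤ K ^ 2 * ∑' i, x i ^ 2) :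
    ∑' i, x i * r i ≤ K * ∑' i, x i ^ 2 := by
  have hamgm (i : ι) : x i * r i ≤ (K * x i ^ 2 + r i ^ 2 / K) / 2 := by
    rw [le_div_iff₀ two_pos, ← sub_nonneg,
      show K * x i ^ 2 + r i ^ 2 / K - x i * r i * 2 = (K * x i - r i) ^ 2 / K by field_simp; ring]
    positivity
  have hbound : Summable fun i => (K * x i ^ 2 + r i ^ 2 / K) / 2 :=
    ((hx.mul_left K).add (hr.div_const K)).div_const 2
  have hxr : Summable fun i => x i * r i := by
    refine Summable.of_norm_bounded (hx.add hr) fun i => ?_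
    rw [Real.norm_eq_abs, abs_mul]
    nlinarith [sq_nonneg (|x i| - |r i|), sq_abs (x i), sq_abs (r i)]
  calc ∑' i, x i * r i ≤ ∑' i, (K * x i ^ 2 + r i ^ 2 / K) / 2 := hxr.tsum_le_tsum hamgm hbound
    _ = (K * ∑' i, x i ^ 2 + (∑' i, r i ^ 2) / K) / 2 := by
      rw [tsum_div_const, (hx.mul_left K).tsum_add (hr.div_const K), tsum_mul_left, tsum_div_const]
    _ ≤ (K * ∑' i, x i ^ 2 + K ^ 2 * (∑' i, x i ^ 2) / K) / 2 := by gcongr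
    _ = K * ∑' i, x i ^ 2 := by field_simp; ring

theorem Real.mul_rpow_sub_one_le_rpow_sub_rpow {c x : ℝ} (hc0 : 0 ≤ c) (hc1 : c ≤ 1)
    (hx : 1 ≤ x) : c * x ^ (c - 1) ≤ x ^ c - (x - 1) ^ c := by
  have hx0 : 0 < x := by linarith
  have hbern := rpow_one_add_le_one_add_mul_self (s := -x⁻¹)
    (by simpa using inv_le_one_of_one_le₀ hx) hc0 hc1
  rw [show 1 + -x⁻¹ = (x - 1) / x by field_simp; ring, Real.div_rpow (by linarith) hx0.le,
    div_le_iff₀ (by positivity)] at hbern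
  rw [Real.rpow_sub_one hx0.ne']
  linarith [show (1 + c * -x⁻¹) * x ^ c = x ^ c - c * (x ^ c / x) by field_simp; ring]

theorem Real.sum_range_add_one_rpow_neg_le {β : ℝ} (hβ0 : 0 ≤ β) (hβ1 : β < 1) (N : ℕ) :
    ∑ i ∈ range N, ((i : ℝ) + 1) ^ (-β) ≤ (N : ℝ) ^ (1 - β) / (1 - β) := by
  induction N with
  | zero => simp [Real.zero_rpow (by linarith : (1:ℝ) - β ≠ 0)]
  | succ N ih =>
    have hstep := Real.mul_rpow_sub_one_le_rpow_sub_rpow (c := 1 - β) (x := N + 1)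
      (by linarith) (by linarith) (by linarith [N.cast_nonneg (α := ℝ)])
    rw [show (1 : ℝ) - β - 1 = -β by ring, add_sub_cancel_right] at hstep
    rw [sum_range_succ, Nat.cast_succ, le_div_iff₀ (by linarith), add_mul]
    rw [le_div_iff₀ (by linarith)] at ih
    linarith

theorem tsum_ofReal_nat_add_rpow_neg_le {γ : ℝ} (hγ : 1 < γ) {N : ℕ} (hN : 0 < N) :
    ∑' i : ℕ, ENNReal.ofReal (((i + N + 1 : ℕ) : ℝ) ^ (-γ)) ≤
      ENNReal.ofReal ((N : ℝ) ^ (1 - γ) / (γ - 1)) := by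
  have hN' : (0 : ℝ) < N := by exact_mod_cast hN
  have anti : AntitoneOn (fun x : ℝ => x ^ (-γ)) (Ici (N : ℝ)) := fun x hx y _ hxy =>
    Real.rpow_le_rpow_of_nonpos (hN'.trans_le hx) hxy (by linarith)
  have integrable : IntegrableOn (fun x : ℝ => x ^ (-γ)) (Ioi (N : ℝ)) :=
    integrableOn_Ioi_rpow_of_lt (by linarith) hN'
  have nonneg : ∀ x ∈ Ioi (N : ℝ), 0 ≤ x ^ (-γ) := fun x hx =>
    Real.rpow_nonneg (hN'.trans hx).le _
  have summable : Summable fun i : ℕ => ((i + N + 1 : ℕ) : ℝ) ^ (-γ) := by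
    simpa [add_assoc] using
      (summable_nat_add_iff (N + 1)).2 (anti.summable_of_integrableOn_Ioi integrable nonneg)
  rw [← ENNReal.ofReal_tsum_of_nonneg (fun _ => Real.rpow_nonneg (Nat.cast_nonneg _) _) summable]
  refine ENNReal.ofReal_le_ofReal ((anti.tsum_comp_add_le_integral N integrable nonneg).trans_eq ?_)
  rw [integral_Ioi_rpow_of_lt (by linarith) hN', show -γ + 1 = 1 - γ by ring, neg_div,
    ← div_neg, neg_sub]

-- Bounds `q ^ (-α) * p ^ (-β)` once `p ≤ q` and `N ≤ p + q`: then `q ≥ N / 2`, and `q ≥ p > N`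
-- in the second branch.
noncomputable def convMajorant (α β N x : ℝ) : ℝ :=
  if x ≤ N then 2 * N ^ (-α) * x ^ (-β) else x ^ (-(α + β))

theorem convMajorant_of_le (α β : ℝ) {N x : ℝ} (h : x ≤ N) :
    convMajorant α β N x = 2 * N ^ (-α) * x ^ (-β) := if_pos h

theorem convMajorant_of_lt (α β : ℝ) {N x : ℝ} (h : N < x) :
    convMajorant α β N x = x ^ (-(α + β)) := if_neg h.not_ge

theorem convMajorant_nonneg (α β : ℝ) {N x : ℝ} (hN : 0 ≤ N) (hx : 0 ≤ x) :
    0 ≤ convMajorant α β N x := by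
  unfold convMajorant; split_ifs <;> positivity

theorem rpow_neg_mul_rpow_neg_le_convMajorant {α β N p q : ℝ} (hα0 : 0 ≤ α) (hα1 : α ≤ 1)
    (hN : 0 < N) (hp : 0 < p) (hpq : p ≤ q) (hNpq : N ≤ p + q) :
    q ^ (-α) * p ^ (-β) ≤ convMajorant α β N p := by
  have hq_far : q ^ (-α) ≤ 2 * N ^ (-α) :=
    calc q ^ (-α) ≤ (N / 2) ^ (-α) :=
          Real.rpow_le_rpow_of_nonpos (by positivity) (by linarith) (by linarith)
      _ = 2 ^ α * N ^ (-α) := by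
          rw [Real.div_rpow hN.le zero_le_two, Real.rpow_neg zero_le_two, div_inv_eq_mul, mul_comm]
      _ ≤ 2 * N ^ (-α) := by
          gcongr
          simpa using Real.rpow_le_rpow_of_exponent_le one_le_two hα1
  unfold convMajorant
  split_ifs with hpN
  · gcongr
  · calc q ^ (-α) * p ^ (-β) ≤ p ^ (-α) * p ^ (-β) :=
          mul_le_mul_of_nonneg_right (Real.rpow_le_rpow_of_nonpos hp hpq (by linarith))
            (by positivity)
      _ = p ^ (-(α + β)) := by rw [← Real.rpow_add hp]; ring_nf

theorem rpow_neg_mul_rpow_neg_le_convMajorant_add {α β N p q : ℝ} (hα0 : 0 < α) (hα1 : α ≤ 1)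
    (hβ0 : 0 < β) (hβ1 : β ≤ 1) (hN : 0 < N) (hp : 0 ≤ p) (hq : 0 ≤ q) (hNpq : N ≤ p + q) :
    q ^ (-α) * p ^ (-β) ≤ convMajorant α β N p + convMajorant β α N q := by
  have hM₁ := convMajorant_nonneg α β hN.le hp
  have hM₂ := convMajorant_nonneg β α hN.le hq
  rcases hp.eq_or_lt with rfl | hp
  · rw [Real.zero_rpow (neg_ne_zero.2 hβ0.ne'), mul_zero]; positivity
  rcases hq.eq_or_lt with rfl | hq
  · rw [Real.zero_rpow (neg_ne_zero.2 hα0.ne'), zero_mul]; positivity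
  rcases le_total p q with hpq | hqp
  · linarith [rpow_neg_mul_rpow_neg_le_convMajorant (β := β) hα0.le hα1 hN hp hpq hNpq]
  · linarith [rpow_neg_mul_rpow_neg_le_convMajorant (β := α) hβ0.le hβ1 hN hq hqp
      (by linarith), mul_comm (q ^ (-α)) (p ^ (-β))]

theorem tsum_ofReal_convMajorant_le {α β : ℝ} (hβ0 : 0 < β) (hβ1 : β < 1) (hαβ : 1 < α + β)
    {N : ℕ} (hN : 0 < N) :
    ∑' k : ℕ, ENNReal.ofReal (convMajorant α β N k) ≤
      ENNReal.ofReal ((2 / (1 - β) + 1 / (α + β - 1)) * (N : ℝ) ^ (1 - (α + β))) := by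
  have hN' : (0 : ℝ) < N := by exact_mod_cast hN
  have hnear : ∑ k ∈ range (N + 1), convMajorant α β N k ≤ 2 / (1 - β) * (N : ℝ) ^ (1 - (α + β)) :=
    calc ∑ k ∈ range (N + 1), convMajorant α β N k
        = 2 * (N : ℝ) ^ (-α) * ∑ i ∈ range N, ((i : ℝ) + 1) ^ (-β) := by
          rw [sum_congr rfl fun k hk => convMajorant_of_le α β
            (by exact_mod_cast Nat.lt_succ_iff.1 (mem_range.1 hk)), ← mul_sum, sum_range_succ']
          simp [Real.zero_rpow (neg_ne_zero.2 hβ0.ne')]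
      _ ≤ 2 * (N : ℝ) ^ (-α) * ((N : ℝ) ^ (1 - β) / (1 - β)) := by
          gcongr; exact Real.sum_range_add_one_rpow_neg_le hβ0.le hβ1 N
      _ = 2 / (1 - β) * (N : ℝ) ^ (1 - (α + β)) := by
          rw [mul_div_assoc', mul_assoc, ← Real.rpow_add hN']; ring_nf
  have hfar (i : ℕ) :
      convMajorant α β N (i + (N + 1) : ℕ) = ((i + N + 1 : ℕ) : ℝ) ^ (-(α + β)) := by
    rw [convMajorant_of_lt α β (by push_cast; linarith [Nat.cast_nonneg (α := ℝ) i]), add_assoc]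
  have h1β : 0 < 1 - β := by linarith
  have hαβ1 : 0 < α + β - 1 := by linarith
  rw [← ENNReal.summable.sum_add_tsum_nat_add' (k := N + 1)]
  simp_rw [hfar]
  rw [← ENNReal.ofReal_sum_of_nonneg fun k _ => convMajorant_nonneg α β hN'.le k.cast_nonneg]
  calc _ ≤ ENNReal.ofReal (2 / (1 - β) * (N : ℝ) ^ (1 - (α + β))) +
        ENNReal.ofReal ((N : ℝ) ^ (1 - (α + β)) / (α + β - 1)) :=
        add_le_add (ENNReal.ofReal_le_ofReal hnear) (tsum_ofReal_nat_add_rpow_neg_le hαβ hN)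
    _ = _ := by
        rw [← ENNReal.ofReal_add (by positivity) (by positivity)]
        congr 1
        ring

theorem tsum_int_natAbs_le (φ : ℕ → ℝ≥0∞) : ∑' m : ℤ, φ m.natAbs ≤ 2 * ∑' k, φ k :=
  calc ∑' m : ℤ, φ m.natAbs ≤ ∑' m : ℤ, φ m.natAbs + φ 0 := le_self_add
    _ = ∑' k : ℕ, (φ k + φ k) := by
      simpa using (tsum_nat_add_neg (f := fun m : ℤ => φ m.natAbs) ENNReal.summable).symm
    _ = 2 * ∑' k, φ k := by rw [ENNReal.tsum_add, two_mul]

-- The terms `m = 0` and `m = n` vanish: `Real.rpow` evaluates `0 ^ (-α)` to `0`.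
theorem tsum_ofReal_abs_sub_rpow_neg_mul_le {α β : ℝ} (hα1 : α < 1) (hβ1 : β < 1)
    (hαβ : 1 < α + β) {n : ℤ} (hn : n ≠ 0) :
    ∑' m : ℤ, ENNReal.ofReal (|(n : ℝ) - m| ^ (-α) * |(m : ℝ)| ^ (-β)) ≤
      ENNReal.ofReal (4 * (1 / (1 - α) + 1 / (1 - β) + 1 / (α + β - 1)) *
        |(n : ℝ)| ^ (1 - (α + β))) := by
  have hα0 : 0 < α := by linarith
  have hβ0 : 0 < β := by linarith
  set N := n.natAbs
  have hN : 0 < N := Int.natAbs_pos.2 hn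
  have hN' : (0 : ℝ) < N := by exact_mod_cast hN
  have hNabs : (N : ℝ) = |(n : ℝ)| := by simp [N]
  have hpoint (m : ℤ) : ENNReal.ofReal (|(n : ℝ) - m| ^ (-α) * |(m : ℝ)| ^ (-β)) ≤
      ENNReal.ofReal (convMajorant α β N m.natAbs) +
        ENNReal.ofReal (convMajorant β α N (n - m).natAbs) := by
    rw [← ENNReal.ofReal_add (convMajorant_nonneg _ _ hN'.le (Nat.cast_nonneg _))
      (convMajorant_nonneg _ _ hN'.le (Nat.cast_nonneg _))]
    refine ENNReal.ofReal_le_ofReal ?_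
    have htri : |(n : ℝ)| ≤ |(m : ℝ)| + |(n : ℝ) - m| := by
      simpa using abs_add_le (m : ℝ) (n - m)
    simpa [hNabs] using rpow_neg_mul_rpow_neg_le_convMajorant_add hα0 hα1.le hβ0 hβ1.le
      (hNabs ▸ hN') (abs_nonneg (m : ℝ)) (abs_nonneg ((n : ℝ) - m)) (hNabs ▸ htri)
  have hshift : ∑' m : ℤ, ENNReal.ofReal (convMajorant β α N (n - m).natAbs) =
      ∑' m : ℤ, ENNReal.ofReal (convMajorant β α N m.natAbs) :=
    (Equiv.subLeft n).tsum_eq fun m => ENNReal.ofReal (convMajorant β α N m.natAbs)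
  calc _ ≤ ∑' m : ℤ, (ENNReal.ofReal (convMajorant α β N m.natAbs) +
          ENNReal.ofReal (convMajorant β α N (n - m).natAbs)) := ENNReal.tsum_le_tsum hpoint
    _ ≤ 2 * ∑' k : ℕ, ENNReal.ofReal (convMajorant α β N k) +
          2 * ∑' k : ℕ, ENNReal.ofReal (convMajorant β α N k) := by
        rw [ENNReal.tsum_add, hshift]
        exact add_le_add (tsum_int_natAbs_le _) (tsum_int_natAbs_le _)
    _ ≤ 2 * ENNReal.ofReal ((2 / (1 - β) + 1 / (α + β - 1)) * (N : ℝ) ^ (1 - (α + β))) +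
          2 * ENNReal.ofReal ((2 / (1 - α) + 1 / (β + α - 1)) * (N : ℝ) ^ (1 - (β + α))) := by
        gcongr
        · exact tsum_ofReal_convMajorant_le hβ0 hβ1 hαβ hN
        · exact tsum_ofReal_convMajorant_le hα0 hα1 (by linarith) hN
    _ = _ := by
        have h1β : 0 < 1 - β := by linarith
        have h1α : 0 < 1 - α := by linarith
        have hαβ1 : 0 < α + β - 1 := by linarith
        rw [add_comm β α, ← ENNReal.ofReal_ofNat 2, ← ENNReal.ofReal_mul zero_le_two,
          ← ENNReal.ofReal_mul zero_le_two, ← ENNReal.ofReal_add (by positivity) (by positivity),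
          hNabs]
        ring_nf

-- The excluded entries are exactly those with a factor `0 ^ (-a)` or `0 ^ (-b)`, i.e. `0`.
theorem matA_eq {a b : ℝ} (ha : a ≠ 0) (hb : b ≠ 0) (n m : ℤ) :
    matA a b n m = |(n : ℝ) - m| ^ (-a) * |(n : ℝ)| ^ (-b) * |(m : ℝ)| ^ (-b) := by
  unfold matA
  split_ifs with h
  · rcases h with rfl | rfl | rfl <;> simp [Real.zero_rpow, ha, hb]
  · push_cast; rfl

theorem matA_nonneg {a b : ℝ} (ha : a ≠ 0) (hb : b ≠ 0) (n m : ℤ) : 0 ≤ matA a b n m := by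
  rw [matA_eq ha hb]; positivity

theorem matA_comm {a b : ℝ} (ha : a ≠ 0) (hb : b ≠ 0) (n m : ℤ) : matA a b n m = matA a b m n := by
  rw [matA_eq ha hb, matA_eq ha hb, abs_sub_comm]; ring

-- Row and column `0` of `matA` vanish, so any positive value at `0` will do.
noncomputable def schurWeight (m : ℤ) : ℝ := if m = 0 then 1 else |(m : ℝ)| ^ (-(1 / 2 : ℝ))

theorem schurWeight_pos (m : ℤ) : 0 < schurWeight m := by
  unfold schurWeight; split_ifs with hm
  · exact one_pos
  · exact Real.rpow_pos_of_pos (abs_pos.2 (Int.cast_ne_zero.2 hm)) _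

theorem tsum_ofReal_matA_mul_schurWeight_le {a b : ℝ} (ha0 : 0 < a) (ha1 : a < 1)
    (hab : 1 ≤ a + 2 * b) : ∃ C : ℝ, 0 < C ∧ ∀ n : ℤ,
      ∑' m, ENNReal.ofReal (matA a b n m * schurWeight m) ≤
        ENNReal.ofReal (C * schurWeight n) := by
  have hb : 0 < b := by linarith
  set t := max (3 / 2 - a - b) (1 - a / 2)
  have ht1 : t < 1 := max_lt (by linarith) (by linarith)
  have hat : 1 < a + t := by linarith [le_max_right (3 / 2 - a - b) (1 - a / 2)]
  have htb : t ≤ b + 1 / 2 := max_le (by linarith) (by linarith)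
  have hC : 0 < 4 * (1 / (1 - a) + 1 / (1 - t) + 1 / (a + t - 1)) := by
    have : 0 < 1 - a := by linarith
    have : 0 < 1 - t := by linarith
    have : 0 < a + t - 1 := by linarith
    positivity
  refine ⟨_, hC, fun n => ?_⟩
  rcases eq_or_ne n 0 with rfl | hn
  · simp [matA]
  have hpoint (m : ℤ) : matA a b n m * schurWeight m ≤
      |(n : ℝ)| ^ (-b) * (|(n : ℝ) - m| ^ (-a) * |(m : ℝ)| ^ (-t)) := by
    rcases eq_or_ne m 0 with rfl | hm
    · simp [matA]; positivity
    have hm1 : 1 ≤ |(m : ℝ)| := by exact_mod_cast Int.one_le_abs hm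
    rw [matA_eq ha0.ne' hb.ne', schurWeight, if_neg hm]
    calc |(n : ℝ) - m| ^ (-a) * |(n : ℝ)| ^ (-b) * |(m : ℝ)| ^ (-b) * |(m : ℝ)| ^ (-(1 / 2 : ℝ))
        = |(n : ℝ)| ^ (-b) * (|(n : ℝ) - m| ^ (-a) * |(m : ℝ)| ^ (-(b + 1 / 2))) := by
          rw [neg_add, Real.rpow_add (by positivity)]; ring
      _ ≤ _ := by gcongr
  have hn1 : 1 ≤ |(n : ℝ)| := by exact_mod_cast Int.one_le_abs hn
  calc ∑' m, ENNReal.ofReal (matA a b n m * schurWeight m)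
      ≤ ∑' m : ℤ, ENNReal.ofReal (|(n : ℝ)| ^ (-b)) *
          ENNReal.ofReal (|(n : ℝ) - m| ^ (-a) * |(m : ℝ)| ^ (-t)) :=
        ENNReal.tsum_le_tsum fun m =>
          (ENNReal.ofReal_le_ofReal (hpoint m)).trans_eq (ENNReal.ofReal_mul (by positivity))
    _ ≤ ENNReal.ofReal (|(n : ℝ)| ^ (-b)) * ENNReal.ofReal
          (4 * (1 / (1 - a) + 1 / (1 - t) + 1 / (a + t - 1)) * |(n : ℝ)| ^ (1 - (a + t))) := by
        rw [ENNReal.tsum_mul_left]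
        gcongr
        exact tsum_ofReal_abs_sub_rpow_neg_mul_le ha1 ht1 hat hn
    _ ≤ _ := by
        rw [← ENNReal.ofReal_mul (by positivity), schurWeight, if_neg hn, mul_left_comm,
          ← Real.rpow_add (by positivity)]
        gcongr
        linarith [le_max_left (3 / 2 - a - b) (1 - a / 2)]

theorem exists_tsum_sq_tsum_ofReal_matA_mul_le {a b : ℝ} (ha0 : 0 < a) (ha1 : a < 1)
    (hab : 1 ≤ a + 2 * b) : ∃ K : ℝ, 0 < K ∧ ∀ X : ℤ → ℝ≥0∞,
      ∑' n, (∑' m, ENNReal.ofReal (matA a b n m) * X m) ^ 2 ≤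
        ENNReal.ofReal (K ^ 2) * ∑' m, X m ^ 2 := by
  have hb : 0 < b := by linarith
  obtain ⟨C, hC, hrow⟩ := tsum_ofReal_matA_mul_schurWeight_le ha0 ha1 hab
  have hrow' (n : ℤ) : ∑' m, ENNReal.ofReal (matA a b n m) * ENNReal.ofReal (schurWeight m) ≤
      ENNReal.ofReal C * ENNReal.ofReal (schurWeight n) := by
    simpa only [ENNReal.ofReal_mul (matA_nonneg ha0.ne' hb.ne' _ _), ENNReal.ofReal_mul hC.le]
      using hrow n
  refine ⟨C, hC, fun X => ?_⟩
  rw [ENNReal.ofReal_pow hC.le, sq]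
  refine ENNReal.tsum_sq_tsum_mul_le_of_schur
    (fun m => (ENNReal.ofReal_pos.2 (schurWeight_pos m)).ne') (fun _ => ENNReal.ofReal_ne_top)
    hrow' (fun m => ?_) X
  simpa only [matA_comm ha0.ne' hb.ne' m] using hrow' m

theorem stmt10_general (a b : ℝ) (ha0 : 0 < a) (ha1 : a < 1)
    (hab : 1 ≤ a + 2 * b) :
    ∃ K > 0, ∀ x : ℤ → ℝ, (∀ n, 0 ≤ x n) → Summable (fun n => x n ^ 2) →
      (∀ n : ℤ, Summable (fun m : ℤ => matA a b n m * x m)) ∧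
      (∑' n : ℤ, (∑' m : ℤ, matA a b n m * x m) ^ 2) ≤ K ^ 2 * ∑' n : ℤ, x n ^ 2 ∧
      (∑' n : ℤ, ∑' m : ℤ, matA a b n m * x n * x m) ≤ K * ∑' n : ℤ, x n ^ 2 := by
  have hb : 0 < b := by linarith
  obtain ⟨K, hK, hbound⟩ := exists_tsum_sq_tsum_ofReal_matA_mul_le ha0 ha1 hab
  refine ⟨K, hK, fun x hx hx2 => ?_⟩
  have hAx (n m : ℤ) : 0 ≤ matA a b n m * x m := mul_nonneg (matA_nonneg ha0.ne' hb.ne' n m) (hx m)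
  have hX : ∑' m, ENNReal.ofReal (x m) ^ 2 = ENNReal.ofReal (∑' m, x m ^ 2) := by
    simp_rw [← ENNReal.ofReal_pow (hx _)]
    exact (ENNReal.ofReal_tsum_of_nonneg (fun _ => sq_nonneg _) hx2).symm
  obtain ⟨hrow, hsq, hle⟩ := summable_tsum_sq_le_of_tsum_ofReal_sq_le hAx
    (by positivity : 0 ≤ K ^ 2 * ∑' m, x m ^ 2) (by
      simpa only [ENNReal.ofReal_mul (matA_nonneg ha0.ne' hb.ne' _ _), hX,
        ← ENNReal.ofReal_mul (sq_nonneg K)] using hbound fun m => ENNReal.ofReal (x m))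
  refine ⟨hrow, hle, ?_⟩
  calc ∑' n, ∑' m, matA a b n m * x n * x m = ∑' n, x n * ∑' m, matA a b n m * x m := by
        simp_rw [← tsum_mul_left, mul_left_comm (x _), mul_assoc]
    _ ≤ K * ∑' n, x n ^ 2 := tsum_mul_le_of_tsum_sq_le hx2 hsq hK hle

/-- For `0 < a < 1`, `b ≥ 0` with `a + 2b ≥ 1`, the matrix
`(a_{nm})` defines a bounded operator on `ℓ²(ℤ)`: there is `K > 0` such that for
every nonnegative square-summable sequence `(x_n)`,
`∑_n (∑_m a_{nm} x_m)² ≤ K² ∑_n x_n²`, and in particular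
`∑_n ∑_m a_{nm} x_n x_m ≤ K ∑_n x_n²`. -/
theorem stmt10 (a b : ℝ) (ha0 : 0 < a) (ha1 : a < 1) (hb : 0 ≤ b)
    (hab : 1 ≤ a + 2 * b) :
    ∃ K > 0, ∀ x : ℤ → ℝ, (∀ n, 0 ≤ x n) → Summable (fun n => x n ^ 2) →
      (∀ n : ℤ, Summable (fun m : ℤ => matA a b n m * x m)) ∧
      (∑' n : ℤ, (∑' m : ℤ, matA a b n m * x m) ^ 2) ≤ K ^ 2 * ∑' n : ℤ, x n ^ 2 ∧
      (∑' n : ℤ, ∑' m : ℤ, matA a b n m * x n * x m) ≤ K * ∑' n : ℤ, x n ^ 2 :=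
  stmt10_general a b ha0 ha1 hab
end
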